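/- arXiv:2604.13819 — 2 statements merged into one kernel-verified Lean document; each statement's English description precedes it below -/
import Mathlib

section
/- For t ∈ ℝ \ ℤ_{≥0} and all λ_1, λ_2 ∈ ℝ, the t-deformed binomial series form a semigroup under t-deformed convolution: B_{λ_1}^{(t)} ⊞^t B_{λ_2}^{(t)} = B_{λ_1+λ_2}^{(t)}. -/
open PowerSeries Finset

/-- Falling factorial `(t)_k = t (t-1) ⋯ (t-k+1)`. -/
noncomputable def ffall (t : ℝ) (k : ℕ) : ℝ := ∏ i ∈ Finset.range k, (t - i)

/-- The `t`-deformed convolution of formal power series. -/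
noncomputable def tconv (t : ℝ) (A B : PowerSeries ℝ) : PowerSeries ℝ :=
  PowerSeries.mk fun k => ∑ p ∈ Finset.HasAntidiagonal.antidiagonal k,
    ffall t k / (ffall t p.1 * ffall t p.2)
      * (PowerSeries.coeff (R := ℝ) p.1 A) * (PowerSeries.coeff (R := ℝ) p.2 B)

/-- Formal logarithm of a power series (with constant term 1):
`log A = - Σ_{k ≥ 1} (1 - A)^k / k`. -/
noncomputable def flog (A : PowerSeries ℝ) : PowerSeries ℝ :=
  PowerSeries.mk fun n =>
    -∑ k ∈ Finset.range (n + 1), (PowerSeries.coeff (R := ℝ) n ((1 - A) ^ k)) / k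

/-- Power sums of `A ∈ 1 + zℝ⟦z⟧`, defined by `Σ p_k(A) z^k = -z (d/dz) log A(z)`. -/
noncomputable def powSum (A : PowerSeries ℝ) (k : ℕ) : ℝ :=
  -(k : ℝ) * PowerSeries.coeff (R := ℝ) k (flog A)

/-- `E^t[A](z) = Σ_k (t^k/(t)_k) a_k z^k`. -/
noncomputable def Et (t : ℝ) (A : PowerSeries ℝ) : PowerSeries ℝ :=
  PowerSeries.mk fun k => t ^ k / ffall t k * PowerSeries.coeff (R := ℝ) k A

/-- The `t`-deformed cumulant transform `C^t[A](z) = -(z/t)(d/dz) log(E^t[A](z))`. -/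
noncomputable def Ct (t : ℝ) (A : PowerSeries ℝ) : PowerSeries ℝ :=
  PowerSeries.mk fun n => -(1 / t) * ((n : ℝ) * PowerSeries.coeff (R := ℝ) n (flog (Et t A)))

/-- The `i`-th `t`-deformed cumulant of `A`. -/
noncomputable def kappa (t : ℝ) (A : PowerSeries ℝ) (i : ℕ) : ℝ :=
  PowerSeries.coeff (R := ℝ) i (Ct t A)

/-- The `t`-deformed binomial series `B_λ^{(t)}(z) = (1-λz)^t`. -/
noncomputable def Bt (t lam : ℝ) : PowerSeries ℝ :=
  PowerSeries.mk fun k => (-1) ^ k * ffall t k / (k.factorial : ℝ) * lam ^ k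

/-!
Scaling the `k`-th coefficient by `(t)_k` intertwines the ordinary product with `⊞^t`, since the
weight `(t)_k / ((t)_i (t)_j)` cancels exactly. Under this scaling `B_λ^{(t)}` is the image of
`exp(-λz)`, so the semigroup law is `exp(-λ₁z) exp(-λ₂z) = exp(-(λ₁+λ₂)z)`.
-/

lemma ffall_ne_zero {t : ℝ} (ht : ∀ n : ℕ, t ≠ n) (k : ℕ) : ffall t k ≠ 0 :=
  prod_ne_zero_iff.mpr fun i _ => sub_ne_zero.mpr (ht i)

noncomputable def ffallScale (t : ℝ) (A : PowerSeries ℝ) : PowerSeries ℝ :=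
  mk fun k => ffall t k * coeff k A

lemma tconv_ffallScale {t : ℝ} (ht : ∀ n : ℕ, t ≠ n) (A B : PowerSeries ℝ) :
    tconv t (ffallScale t A) (ffallScale t B) = ffallScale t (A * B) := by
  ext k
  simp only [tconv, ffallScale, coeff_mk, coeff_mul, mul_sum]
  refine sum_congr rfl fun p _ => ?_
  field_simp [ffall_ne_zero ht p.1, ffall_ne_zero ht p.2]

lemma Bt_eq_ffallScale_rescale_exp (t lam : ℝ) :
    Bt t lam = ffallScale t (rescale (-lam) (exp ℝ)) := by
  ext k
  simp only [Bt, ffallScale, coeff_mk, coeff_rescale, coeff_exp, map_div₀, map_one, map_natCast]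
  rw [neg_pow]
  ring

/-- Semigroup property of the binomial series under `⊞^t`:
`B_{λ₁}^{(t)} ⊞^t B_{λ₂}^{(t)} = B_{λ₁+λ₂}^{(t)}`. -/
theorem Bt_tconv (t : ℝ) (ht : ∀ n : ℕ, t ≠ (n : ℝ)) (lam₁ lam₂ : ℝ) :
    tconv t (Bt t lam₁) (Bt t lam₂) = Bt t (lam₁ + lam₂) := by
  simp only [Bt_eq_ffallScale_rescale_exp, tconv_ffallScale ht, exp_mul_exp_eq_exp_add, neg_add]
end

section
/- For t ∈ ℝ \ ℤ_{≥0}, define H_s^{(t)} := D_{√s}[H^{(t)}] for s ≥ 0, where D_r[A](z) := A(rz) denotes dilation. Then for all s_1, s_2 ≥ 0, one has H_{s_1}^{(t)} ⊞^t H_{s_2}^{(t)} = H_{s_1+s_2}^{(t)}. -/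
open PowerSeries Finset

/-- The `t`-deformed Hermite series. -/
noncomputable def Ht (t : ℝ) : PowerSeries ℝ :=
  PowerSeries.mk fun n =>
    if Even n then
      (-1) ^ (n / 2) * ffall t n / (t ^ (n / 2) * (2 ^ (n / 2) * ((n / 2).factorial : ℝ)))
    else 0

/-!
The convolution `⊞^t` is the ordinary product conjugated by the weighting `aₙ ↦ (t)ₙ aₙ`, and
`D_{√s}[H^{(t)}]` is the weighting of `exp(-s z² / (2t))`. The semigroup law is therefore
`e^{a z²} e^{b z²} = e^{(a+b) z²}`.
-/

namespace PowerSeries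

theorem rescale_expand {R : Type*} [CommRing R] (p : ℕ) (hp : p ≠ 0) (r : R) (A : R⟦X⟧) :
    rescale r (expand p hp A) = expand p hp (rescale (r ^ p) A) := by
  ext n
  rw [coeff_rescale, coeff_expand, coeff_expand]
  split_ifs with h
  · obtain ⟨m, rfl⟩ := h
    rw [Nat.mul_div_cancel_left _ (Nat.pos_of_ne_zero hp), coeff_rescale, pow_mul]
  · rw [mul_zero]

end PowerSeries

theorem ffall_ne_zero_of_le {t : ℝ} {i n : ℕ} (hin : i ≤ n) (hn : ffall t n ≠ 0) :
    ffall t i ≠ 0 :=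
  Finset.prod_ne_zero_iff.2 fun k hk =>
    Finset.prod_ne_zero_iff.1 hn k (Finset.range_subset_range.2 hin hk)

noncomputable def ffallWeight (t : ℝ) (A : ℝ⟦X⟧) : ℝ⟦X⟧ :=
  mk fun n => ffall t n * coeff n A

theorem coeff_ffallWeight (t : ℝ) (A : ℝ⟦X⟧) (n : ℕ) :
    coeff n (ffallWeight t A) = ffall t n * coeff n A :=
  coeff_mk _ _

theorem rescale_ffallWeight (t r : ℝ) (A : ℝ⟦X⟧) :
    rescale r (ffallWeight t A) = ffallWeight t (rescale r A) := by
  ext n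
  simp only [coeff_rescale, coeff_ffallWeight]
  ring

theorem tconv_ffallWeight (t : ℝ) (A B : ℝ⟦X⟧) :
    tconv t (ffallWeight t A) (ffallWeight t B) = ffallWeight t (A * B) := by
  ext n
  rw [tconv, coeff_mk, coeff_ffallWeight, coeff_mul, Finset.mul_sum]
  refine Finset.sum_congr rfl fun p hp => ?_
  rw [coeff_ffallWeight, coeff_ffallWeight]
  by_cases hn : ffall t n = 0
  · simp [hn]
  have hpn : p.1 + p.2 = n := Finset.HasAntidiagonal.mem_antidiagonal.1 hp
  have h₁ := ffall_ne_zero_of_le (by omega : p.1 ≤ n) hn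
  have h₂ := ffall_ne_zero_of_le (by omega : p.2 ≤ n) hn
  field_simp

theorem Ht_eq_ffallWeight (t : ℝ) :
    Ht t = ffallWeight t (expand 2 two_ne_zero (rescale (-(2 * t)⁻¹) (exp ℝ))) := by
  ext n
  rw [coeff_ffallWeight, coeff_expand, Ht, coeff_mk]
  rcases Nat.even_or_odd' n with ⟨k, rfl | rfl⟩
  · have hk : 2 * k / 2 = k := by omega
    simp only [even_two_mul, dvd_mul_right, if_true, hk, coeff_rescale, coeff_exp]
    rw [map_div₀, map_one, map_natCast, neg_pow (2 * t)⁻¹, inv_pow, mul_pow]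
    ring
  · have hodd : ¬ Even (2 * k + 1) := Nat.not_even_iff_odd.2 (odd_two_mul_add_one k)
    have hndvd : ¬ 2 ∣ 2 * k + 1 := by omega
    simp [hodd, hndvd]

theorem rescale_sqrt_Ht (t : ℝ) {s : ℝ} (hs : 0 ≤ s) :
    rescale (Real.sqrt s) (Ht t) =
      ffallWeight t (expand 2 two_ne_zero (rescale (-s / (2 * t)) (exp ℝ))) := by
  rw [Ht_eq_ffallWeight, rescale_ffallWeight, rescale_expand, rescale_rescale,
    Real.sq_sqrt hs, neg_mul, inv_mul_eq_div, neg_div]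

theorem Ht_tconv_general (t : ℝ) (s₁ s₂ : ℝ)
    (hs₁ : 0 ≤ s₁) (hs₂ : 0 ≤ s₂) :
    tconv t (PowerSeries.rescale (Real.sqrt s₁) (Ht t))
        (PowerSeries.rescale (Real.sqrt s₂) (Ht t)) =
      PowerSeries.rescale (Real.sqrt (s₁ + s₂)) (Ht t) := by
  rw [rescale_sqrt_Ht t hs₁, rescale_sqrt_Ht t hs₂, rescale_sqrt_Ht t (add_nonneg hs₁ hs₂),
    tconv_ffallWeight, ← map_mul, exp_mul_exp_eq_exp_add, ← add_div, ← neg_add]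

/-- With `H_s^{(t)} := D_{√s}[H^{(t)}]`, one has
`H_{s₁}^{(t)} ⊞^t H_{s₂}^{(t)} = H_{s₁+s₂}^{(t)}` for all `s₁, s₂ ≥ 0`. -/
theorem Ht_tconv (t : ℝ) (ht : ∀ n : ℕ, t ≠ (n : ℝ)) (s₁ s₂ : ℝ)
    (hs₁ : 0 ≤ s₁) (hs₂ : 0 ≤ s₂) :
    tconv t (PowerSeries.rescale (Real.sqrt s₁) (Ht t))
        (PowerSeries.rescale (Real.sqrt s₂) (Ht t)) =
      PowerSeries.rescale (Real.sqrt (s₁ + s₂)) (Ht t) :=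
  Ht_tconv_general t s₁ s₂ hs₁ hs₂
end
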